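/- arXiv:2509.20035 — 4 statements merged into one kernel-verified Lean document; each statement's English description precedes it below -/
import Mathlib

section
/- Let G be a group which satisfies a mixed identity and is not of finite exponent (there is no positive integer N with g^N = 1 for all g ∈ G). Let Ĝ be a group containing G as a subgroup and generated by G together with elements ĝ₁,…,ĝ_ℓ, and suppose Ĝ arises as a limit over G in the following sense: there exist tuples (g_{n,1},…,g_{n,ℓ}) ∈ G^ℓ (n ∈ ℕ) such that for every element u of the free product G ∗ F_ℓ (F_ℓ free of rank ℓ), u evaluates to 1 at (ĝ₁,…,ĝ_ℓ) in Ĝ (via the homomorphism G ∗ F_ℓ → Ĝ restricting to the inclusion on G and sending the i-th free generator to ĝ_i) if and only if u evaluates to 1 at (g_{n,1},…,g_{n,ℓ}) in G for all sufficiently large n. Then for every subgroup K ≤ Ĝ which is not of finite exponent, Ĝ is not the internal free product of G and K; i.e., the canonical homomorphism G ∗ K → Ĝ induced by the two inclusions is not an isomorphism. -/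
/-!
A mixed identity `w` of `G` in `m` variables survives in any limit `Ĝ` over `G`: every tuple of
`Ĝ` is the value at `ĝ` of words with constants `u₁, …, u_m`, and `w(u₁, …, u_m)` is again an
identity of `G`, so it holds along `(g_n)` and hence at `ĝ`. If moreover `Ĝ = G ∗ K`, pick
`x ∈ G` with `x² ≠ 1` and `κ ∈ K` with `κⁿ ≠ 1` for `0 < n ≤ 2m` (neither group has finite
exponent). Then `tᵢ ↦ κ^(i+1) x κ^(i+1)` embeds `G ∗ F_m` into `G ∗ K`: a reduced word in the
`tᵢ` becomes a reduced word of `G ∗ K` that starts and ends with a power of `κ`, since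
neighbouring powers `κ^(±(i+1))` and `κ^(±(j+1))` never cancel, and the ping-pong lemma applies.
So `w` does not vanish at these `tᵢ`.
-/

open Filter

noncomputable section

variable {G : Type*} [Group G]

/-- Evaluation of a word with constants in `G` and `ℓ` variables (an element of the free
product `G ∗ F_ℓ`) at a tuple from `G`: the homomorphism `G ∗ F_ℓ → G` which is the identity
on `G` and sends the `i`-th free generator to `g i`. -/
def evalWord {ℓ : ℕ} (g : Fin ℓ → G) :
    Monoid.Coprod G (FreeGroup (Fin ℓ)) →* G :=
  Monoid.Coprod.lift (MonoidHom.id G) (FreeGroup.lift g)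

/-- A mixed identity (law with constants) for `G`: a word `w ∈ G ∗ F_ℓ` not lying in the free
factor `G` which evaluates to `1` at every tuple from `G^ℓ`. -/
def HasMixedIdentity (G : Type*) [Group G] : Prop :=
  ∃ (ℓ : ℕ) (w : Monoid.Coprod G (FreeGroup (Fin ℓ))),
    w ∉ (Monoid.Coprod.inl : G →* Monoid.Coprod G (FreeGroup (Fin ℓ))).range ∧
      ∀ g : Fin ℓ → G, evalWord g w = 1

/-- A group has finite exponent if some positive power kills every element. -/
def FiniteExponent (G : Type*) [Group G] : Prop :=
  ∃ N : ℕ, 0 < N ∧ ∀ g : G, g ^ N = 1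

universe u v

open Monoid Cardinal Pointwise

theorem zpow_ne_one_of_natAbs_le {G : Type*} [Group G] {g : G} {N : ℕ}
    (hg : ∀ n : ℕ, 0 < n → n ≤ N → g ^ n ≠ 1) {z : ℤ} (hz : z ≠ 0) (hzN : z.natAbs ≤ N) :
    g ^ z ≠ 1 := by
  rw [Ne, ← pow_natAbs_eq_one]
  exact hg _ (Int.natAbs_pos.mpr hz) hzN

theorem exists_forall_pow_ne_one_of_not_exponentExists {M : Type*} [Monoid M]
    (h : ¬ Monoid.ExponentExists M) (N : ℕ) : ∃ g : M, ∀ n : ℕ, 0 < n → n ≤ N → g ^ n ≠ 1 := by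
  by_contra! hN
  refine h ⟨N.factorial, N.factorial_pos, fun g => ?_⟩
  obtain ⟨n, hn, hnN, hgn⟩ := hN g
  obtain ⟨c, hc⟩ := Nat.dvd_factorial hn hnN
  rw [hc, pow_mul, hgn, one_pow]

theorem Subgroup.exponentExists_iff {H : Type*} [Group H] (K : Subgroup H) :
    Monoid.ExponentExists K ↔ ∃ N : ℕ, 0 < N ∧ ∀ k ∈ K, k ^ N = 1 := by
  simp [Monoid.ExponentExists, Subtype.ext_iff]

theorem three_le_mk_of_pow_ne_one {A : Type*} [Group A] {x : A} (hx : x ≠ 1) (hx2 : x ^ 2 ≠ 1) :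
    3 ≤ #A := by
  have hxinv : x ≠ x⁻¹ := fun h => hx2 (by rw [pow_two, ← mul_inv_cancel x, ← h])
  have : Function.Injective ![1, x, x⁻¹] := by
    intro i j hij
    fin_cases i <;> fin_cases j <;> simp_all [eq_comm]
  simpa using Cardinal.lift_mk_le_lift_mk_of_injective this

namespace Monoid.Coprod

section Bool

variable {M N : Type u} [Group M] [Group N]

instance instGroupCond : ∀ b : Bool, Group (cond b M N)
  | true => ‹Group M›
  | false => ‹Group N›

def condLift {P : Type*} [Monoid P] (f : M →* P) (g : N →* P) : ∀ b : Bool, cond b M N →* P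
  | true => f
  | false => g

variable (M N) in
def mulEquivCoprodI : M ∗ N ≃* CoprodI (fun b : Bool => cond b M N) :=
  MonoidHom.toMulEquiv
    (lift (CoprodI.of (M := fun b : Bool => cond b M N) (i := true))
      (CoprodI.of (M := fun b : Bool => cond b M N) (i := false)))
    (CoprodI.lift (condLift inl inr))
    (hom_ext (by ext; simp [condLift]) (by ext; simp [condLift]))
    (CoprodI.ext_hom _ _ fun b => by cases b <;> ext <;> simp [condLift])

theorem lift_eq_coprodILift_comp {P : Type*} [Monoid P] (f : M →* P) (g : N →* P) :
    lift f g = (CoprodI.lift (condLift f g)).comp (mulEquivCoprodI M N).toMonoidHom :=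
  hom_ext (by ext; simp [mulEquivCoprodI, condLift]) (by ext; simp [mulEquivCoprodI, condLift])

end Bool

theorem lift_injective_of_ping_pong {M : Type u} {N : Type v} [Group M] [Group N]
    {P : Type*} [Group P] (f : M →* P) (g : N →* P) (hcard : 3 ≤ #M ∨ 3 ≤ #N)
    {α : Type*} [MulAction P α] {X Y : Set α} (hX : X.Nonempty) (hY : Y.Nonempty)
    (hXY : Disjoint X Y) (hf : ∀ a, a ≠ 1 → f a • Y ⊆ X) (hg : ∀ b, b ≠ 1 → g b • X ⊆ Y) :
    Function.Injective (lift f g) := by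
  let e : M ∗ N ≃* ULift.{v} M ∗ ULift.{u} N :=
    MulEquiv.coprodCongr MulEquiv.ulift.symm MulEquiv.ulift.symm
  have hlift : lift f g = (lift (f.comp MulEquiv.ulift.toMonoidHom)
      (g.comp MulEquiv.ulift.toMonoidHom)).comp e.toMonoidHom :=
    hom_ext (MonoidHom.ext fun _ => rfl) (MonoidHom.ext fun _ => rfl)
  rw [hlift, lift_eq_coprodILift_comp]
  refine (CoprodI.lift_injective_of_ping_pong _ ?_ (fun b => cond b X Y) ?_ ?_ ?_).comp
    ((mulEquivCoprodI _ _).injective.comp e.injective)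
  · exact Or.inr (hcard.elim (fun h => ⟨true, by simpa [Cardinal.mk_uLift] using h⟩)
      (fun h => ⟨false, by simpa [Cardinal.mk_uLift] using h⟩))
  · rintro (_ | _) <;> assumption
  · rintro (_ | _) (_ | _) h
    exacts [absurd rfl h, hXY.symm, hXY, absurd rfl h]
  · rintro (_ | _) (_ | _) h x hx
    exacts [absurd rfl h, hg x.down (MulEquiv.ulift.map_ne_one_iff.mpr hx),
      hf x.down (MulEquiv.ulift.map_ne_one_iff.mpr hx),
      absurd rfl h]

end Monoid.Coprod

namespace Monoid.CoprodI

section PingPongOnWords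

variable {ι : Type*} {M : ι → Type*} [∀ i, Monoid (M i)] [DecidableEq ι]
  [∀ i, DecidableEq (M i)]

theorem Word.fstIdx_of_smul {i : ι} {m : M i} (hm : m ≠ 1) {w : Word M}
    (hw : w.fstIdx ≠ some i) : (of m • w).fstIdx = some i := by
  rw [← Word.cons_eq_smul (h1 := hw) (h2 := hm), Word.fstIdx_cons]

theorem NeWord.fstIdx_prod_smul {i j : ι} (v : NeWord M i j) {w : Word M}
    (hw : w.fstIdx ≠ some j) : (v.prod • w).fstIdx = some i := by
  induction v generalizing w with
  | singleton x hx => rw [NeWord.prod_singleton]; exact Word.fstIdx_of_smul hx hw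
  | append v₁ hne v₂ ih₁ ih₂ =>
    rw [NeWord.append_prod, mul_smul]
    exact ih₁ (by rw [ih₂ hw]; exact (Option.some_injective _).ne hne.symm)

end PingPongOnWords

section Sandwich

variable {m : ℕ}

def signedIndex (p : Fin m × Bool) : ℤ := cond p.2 ((p.1 : ℤ) + 1) (-((p.1 : ℤ) + 1))

theorem signedIndex_ne_zero (p : Fin m × Bool) : signedIndex p ≠ 0 := by
  rcases p with ⟨i, _ | _⟩ <;> simp only [signedIndex, cond_true, cond_false] <;> omega

theorem natAbs_signedIndex_le (p : Fin m × Bool) : (signedIndex p).natAbs ≤ m := by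
  rcases p with ⟨i, _ | _⟩ <;> simp only [signedIndex, cond_true, cond_false] <;> omega

theorem signedIndex_add_ne_zero {p q : Fin m × Bool} (h : p.1 = q.1 → p.2 = q.2) :
    signedIndex p + signedIndex q ≠ 0 := by
  rcases p with ⟨i, _ | _⟩ <;> rcases q with ⟨j, _ | _⟩ <;>
    simp only [signedIndex, cond_true, cond_false, Fin.ext_iff, Bool.false_eq_true,
      Bool.true_eq_false, imp_false] at h ⊢ <;> omega

variable {M : Bool → Type*} [∀ b, Group (M b)]

/-- The image `κ^(±(i+1)) x^(±1) κ^(±(i+1))` of the letter `tᵢ^(±1)`, encoded as `p = (i, ±)`. -/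
def sandwichLetter (x : M true) (κ : M false) (p : Fin m × Bool) : CoprodI M :=
  of (κ ^ signedIndex p) * of (cond p.2 x x⁻¹) * of (κ ^ signedIndex p)

theorem cond_sandwichLetter (x : M true) (κ : M false) (p : Fin m × Bool) :
    cond p.2 (sandwichLetter x κ (p.1, true)) (sandwichLetter x κ (p.1, true))⁻¹ =
      sandwichLetter x κ p := by
  rcases p with ⟨i, _ | _⟩
  · simp only [sandwichLetter, signedIndex, cond_true, cond_false, mul_inv_rev, ← map_inv,
      zpow_neg, mul_assoc]
  · rfl

variable {x : M true} {κ : M false}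

theorem exists_neWord_of_isReduced (hx : x ≠ 1) (hκ : ∀ n : ℕ, 0 < n → n ≤ 2 * m → κ ^ n ≠ 1)
    (p : Fin m × Bool) (L : List (Fin m × Bool)) (hL : FreeGroup.IsReduced (p :: L)) :
    ∃ v : NeWord M false false, v.head = κ ^ signedIndex p ∧
      v.prod = ((p :: L).map (sandwichLetter x κ)).prod := by
  have hp : ∀ p : Fin m × Bool, κ ^ signedIndex p ≠ 1 := fun p =>
    zpow_ne_one_of_natAbs_le hκ (signedIndex_ne_zero p) ((natAbs_signedIndex_le p).trans (by omega))
  have hxp : ∀ b : Bool, cond b x x⁻¹ ≠ 1 := fun b => by cases b <;> simpa using hx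
  induction L generalizing p with
  | nil =>
    refine ⟨.append (.singleton _ (hp p)) (by decide)
      (.append (.singleton _ (hxp p.2)) (by decide) (.singleton _ (hp p))), rfl, ?_⟩
    simp [sandwichLetter, mul_assoc]
  | cons q L ih =>
    obtain ⟨hpq, hqL⟩ := FreeGroup.isReduced_cons_cons.mp hL
    obtain ⟨v, hv_head, hv_prod⟩ := ih q hqL
    have hmerge : κ ^ signedIndex p * v.head ≠ 1 := by
      rw [hv_head, ← zpow_add]
      refine zpow_ne_one_of_natAbs_le hκ (signedIndex_add_ne_zero hpq) ?_
      have := natAbs_signedIndex_le p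
      have := natAbs_signedIndex_le q
      omega
    refine ⟨.append (.singleton _ (hp p)) (by decide)
      (.append (.singleton _ (hxp p.2)) (by decide) (v.mulHead _ hmerge)), rfl, ?_⟩
    rw [List.map_cons, List.prod_cons, ← hv_prod]
    simp [sandwichLetter, mul_assoc]

theorem exists_neWord_prod_eq_lift (hx : x ≠ 1)
    (hκ : ∀ n : ℕ, 0 < n → n ≤ 2 * m → κ ^ n ≠ 1) {u : FreeGroup (Fin m)} (hu : u ≠ 1) :
    ∃ v : NeWord M false false,
      v.prod = FreeGroup.lift (fun i => sandwichLetter x κ (i, true)) u := by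
  obtain ⟨p, L, hpL⟩ : ∃ p L, u.toWord = p :: L :=
    List.exists_cons_of_ne_nil (mt FreeGroup.toWord_eq_nil_iff.mp hu)
  obtain ⟨v, -, hv⟩ :=
    exists_neWord_of_isReduced hx hκ p L (hpL ▸ FreeGroup.isReduced_toWord)
  refine ⟨v, ?_⟩
  rw [← FreeGroup.mk_toWord (x := u), FreeGroup.lift_mk, hpL, hv]
  simp only [cond_sandwichLetter]

theorem coprodLift_sandwichLetter_injective {A : Type*} [Group A] (hA : 3 ≤ #A)
    {e : A →* M true} (he : Function.Injective e) (hx : x ≠ 1)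
    (hκ : ∀ n : ℕ, 0 < n → n ≤ 2 * m → κ ^ n ≠ 1) :
    Function.Injective (Coprod.lift ((of (i := true)).comp e)
      (FreeGroup.lift fun i : Fin m => sandwichLetter x κ (i, true))) := by
  classical
  -- `Y` contains the empty word, so it is nonempty even when `κ = 1` (possible for `m = 0`).
  refine Coprod.lift_injective_of_ping_pong _ _ (Or.inl hA)
    (X := {w : Word M | w.fstIdx = some true}) (Y := {w | w.fstIdx ≠ some true})
    ⟨_, Word.fstIdx_of_smul (w := Word.empty) hx nofun⟩ ⟨Word.empty, nofun⟩
    (Set.disjoint_left.mpr fun w h₁ h₂ => h₂ h₁) ?_ ?_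
  · intro a ha
    refine Set.smul_set_subset_iff.mpr fun w hw => ?_
    rw [MonoidHom.comp_apply, Set.mem_ofPred_eq]
    exact Word.fstIdx_of_smul ((map_ne_one_iff e he).mpr ha) hw
  · intro u hu
    obtain ⟨v, hv⟩ := exists_neWord_prod_eq_lift hx hκ hu
    rw [← hv]
    refine Set.smul_set_subset_iff.mpr fun w hw => ?_
    rw [Set.mem_ofPred_eq, v.fstIdx_prod_smul (by rw [hw]; decide)]
    decide

end Sandwich

end Monoid.CoprodI

namespace Monoid.Coprod

open CoprodI

variable {A : Type u} {B : Type v} [Group A] [Group B]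

def sandwichSubst (m : ℕ) (x : A) (κ : B) : A ∗ FreeGroup (Fin m) →* A ∗ B :=
  lift inl <| FreeGroup.lift fun i : Fin m =>
    inr (κ ^ ((i : ℤ) + 1)) * inl x * inr (κ ^ ((i : ℤ) + 1))

theorem sandwichSubst_injective {m : ℕ} {x : A} {κ : B}
    (hx : ∀ n : ℕ, 0 < n → n ≤ 2 → x ^ n ≠ 1) (hκ : ∀ n : ℕ, 0 < n → n ≤ 2 * m → κ ^ n ≠ 1) :
    Function.Injective (sandwichSubst m x κ) := by
  -- `CoprodI` needs all factors in one universe.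
  let M : Bool → Type (max u v) := fun b => cond b (ULift.{v} A) (ULift.{u} B)
  let R : A ∗ B →* CoprodI M :=
    lift ((of (M := M) (i := true)).comp MulEquiv.ulift.symm.toMonoidHom)
      ((of (M := M) (i := false)).comp MulEquiv.ulift.symm.toMonoidHom)
  have hx₁ : x ≠ 1 := by simpa using hx 1 one_pos one_le_two
  have hx' : (MulEquiv.ulift.symm x : M true) ≠ 1 := MulEquiv.ulift.symm.map_ne_one_iff.mpr hx₁
  have hκ' : ∀ n : ℕ, 0 < n → n ≤ 2 * m → (MulEquiv.ulift.symm κ : M false) ^ n ≠ 1 :=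
    fun n hn hnm => by rw [← map_pow, MulEquiv.map_ne_one_iff]; exact hκ n hn hnm
  have hR : R.comp (sandwichSubst m x κ) =
      lift ((of (i := true)).comp MulEquiv.ulift.symm.toMonoidHom) (FreeGroup.lift fun i =>
        sandwichLetter (M := M) (MulEquiv.ulift.symm x) (MulEquiv.ulift.symm κ) (i, true)) :=
    hom_ext rfl <| FreeGroup.ext_hom _ _ fun i => by
      simp [R, sandwichSubst, sandwichLetter, signedIndex, map_zpow]
  refine Function.Injective.of_comp (f := R) ?_
  rw [← MonoidHom.coe_comp, hR]
  exact coprodLift_sandwichLetter_injective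
    (three_le_mk_of_pow_ne_one hx₁ (hx 2 two_pos le_rfl)) MulEquiv.ulift.symm.injective hx' hκ'

end Monoid.Coprod

open Monoid.Coprod in
theorem map_eq_one_of_forall_evalWord_eq_one {Ghat : Type*} [Group Ghat] {ι : G →* Ghat}
    {ℓ : ℕ} {ghat : Fin ℓ → Ghat}
    (hgen : Subgroup.closure (Set.range ι ∪ Set.range ghat) = ⊤)
    (hlaw : ∀ u : G ∗ FreeGroup (Fin ℓ), (∀ h : Fin ℓ → G, evalWord h u = 1) →
      lift ι (FreeGroup.lift ghat) u = 1)
    {m : ℕ} {w : G ∗ FreeGroup (Fin m)} (hw : ∀ h : Fin m → G, evalWord h w = 1)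
    (φ : G ∗ FreeGroup (Fin m) →* Ghat) (hφ : φ.comp inl = ι) : φ w = 1 := by
  have hsurj : Function.Surjective (lift ι (FreeGroup.lift ghat)) := by
    rw [← MonoidHom.range_eq_top, range_lift, FreeGroup.range_lift_eq_closure, ← hgen,
      Subgroup.closure_union, ← MonoidHom.coe_range, Subgroup.closure_eq]
  choose u hu using fun i => hsurj (φ (inr (FreeGroup.of i)))
  let σ : G ∗ FreeGroup (Fin m) →* G ∗ FreeGroup (Fin ℓ) := lift inl (FreeGroup.lift u)
  have hφσ : (lift ι (FreeGroup.lift ghat)).comp σ = φ :=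
    hom_ext (by rw [← hφ]; rfl) (FreeGroup.ext_hom _ _ fun i => by simp [σ, hu])
  have hσ : ∀ h, (evalWord h).comp σ = evalWord fun i => evalWord h (u i) := fun h =>
    hom_ext rfl (FreeGroup.ext_hom _ _ fun i => by simp [σ, evalWord])
  rw [← hφσ, MonoidHom.comp_apply]
  exact hlaw (σ w) fun h => by rw [← MonoidHom.comp_apply, hσ, hw]

open Monoid.Coprod in
theorem limit_group_not_free_product_of_mixed_identity_general
    (hmix : HasMixedIdentity G) (hexp : ¬ FiniteExponent G)
    {Ghat : Type*} [Group Ghat] (ι : G →* Ghat)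
    {ℓ : ℕ} (ghat : Fin ℓ → Ghat)
    (hgen : Subgroup.closure (Set.range ι ∪ Set.range ghat) = ⊤)
    (g : ℕ → Fin ℓ → G)
    (hlim : ∀ u : Monoid.Coprod G (FreeGroup (Fin ℓ)),
      Monoid.Coprod.lift ι (FreeGroup.lift ghat) u = 1 ↔
        ∀ᶠ n in atTop, evalWord (g n) u = 1)
    (K : Subgroup Ghat) (hK : ¬ ∃ N : ℕ, 0 < N ∧ ∀ k ∈ K, k ^ N = 1) :
    ¬ Function.Bijective (Monoid.Coprod.lift ι K.subtype) := by
  intro hbij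
  obtain ⟨m, w, hw_notin, hw⟩ := hmix
  obtain ⟨x, hx⟩ := exists_forall_pow_ne_one_of_not_exponentExists hexp 2
  obtain ⟨κ, hκ⟩ := exists_forall_pow_ne_one_of_not_exponentExists
    ((Subgroup.exponentExists_iff K).not.mpr hK) (2 * m)
  let φ := (lift ι K.subtype).comp (sandwichSubst m x κ)
  have hφ : Function.Injective φ := hbij.injective.comp (sandwichSubst_injective hx hκ)
  have hφw : φ w = 1 := map_eq_one_of_forall_evalWord_eq_one hgen
    (fun u hu => (hlim u).mpr (Eventually.of_forall fun n => hu (g n))) hw φ rfl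
  exact hw_notin ⟨1, by rw [map_one, (injective_iff_map_eq_one φ).mp hφ w hφw]⟩

/-- **Statement 4.** Let `G` satisfy a mixed identity and not be of finite exponent. Let `Ĝ` be
a group containing `G` (via an injective homomorphism `ι`) and generated by `G` together with
`ĝ₁, …, ĝ_ℓ`, and suppose `Ĝ` is a limit over `G`: there are tuples `(g_{n,1},…,g_{n,ℓ}) ∈ G^ℓ`
such that each word with constants `u ∈ G ∗ F_ℓ` evaluates to `1` at `(ĝ₁,…,ĝ_ℓ)` in `Ĝ` iff it
evaluates to `1` at `(g_{n,1},…,g_{n,ℓ})` in `G` for all sufficiently large `n`. Then for every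
subgroup `K ≤ Ĝ` not of finite exponent, the canonical homomorphism `G ∗ K → Ĝ` is not an
isomorphism. -/
theorem limit_group_not_free_product_of_mixed_identity
    (hmix : HasMixedIdentity G) (hexp : ¬ FiniteExponent G)
    {Ghat : Type*} [Group Ghat] (ι : G →* Ghat) (hι : Function.Injective ι)
    {ℓ : ℕ} (ghat : Fin ℓ → Ghat)
    (hgen : Subgroup.closure (Set.range ι ∪ Set.range ghat) = ⊤)
    (g : ℕ → Fin ℓ → G)
    (hlim : ∀ u : Monoid.Coprod G (FreeGroup (Fin ℓ)),
      Monoid.Coprod.lift ι (FreeGroup.lift ghat) u = 1 ↔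
        ∀ᶠ n in atTop, evalWord (g n) u = 1)
    (K : Subgroup Ghat) (hK : ¬ ∃ N : ℕ, 0 < N ∧ ∀ k ∈ K, k ^ N = 1) :
    ¬ Function.Bijective (Monoid.Coprod.lift ι K.subtype) :=
  limit_group_not_free_product_of_mixed_identity_general hmix hexp ι ghat hgen g hlim K hK

end
end

section
/- Let G be a mixed identity free group and let n ≥ 1. Then for every finite set S of nontrivial elements of the free product G ∗ F_n (F_n free of rank n), there exists a tuple (g₁,…,g_n) ∈ G^n such that the evaluation homomorphism G ∗ F_n → G (identity on G, i-th free generator ↦ g_i) sends no element of S to 1. Consequently G ∗ F_n is a limit group over G: every finite subset of the set of relations and non-relations satisfied by a free basis of the F_n-factor in G ∗ F_n (with constants from G) is realized by a tuple in G. -/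
/-!
A nontrivial word in `G ∗ F_ℓ` is either a nontrivial constant of `G` or, by mixed identity
freeness, does not vanish at some tuple. Finitely many words are merged into fewer: for
`u, w ≠ 1` and a fresh variable `x`, the commutator `⁅u, x w x⁻¹⁆ ∈ G ∗ F_{ℓ+1}` is nontrivial by
the normal form theorem for free products, and a tuple at which it does not vanish restricts to
one at which neither `u` nor `w` vanishes.
-/

noncomputable section

variable {G : Type*} [Group G]

open scoped commutatorElement

namespace Monoid.CoprodI

variable {ι : Type*}

theorem NeWord.prod_ne_one {M : ι → Type*} [∀ i, Monoid (M i)] {i j : ι} (w : NeWord M i j) :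
    w.prod ≠ 1 := by
  classical
  intro h
  have hempty : w.toWord = Word.empty :=
    Word.equiv.symm.injective (h.trans Word.prod_empty.symm)
  exact w.toList_ne_nil (congrArg Word.toList hempty)

theorem commutatorElement_of_conj_of_ne_one {M : ι → Type*} [∀ i, Group (M i)] {i j : ι}
    (hij : i ≠ j) {a b : M i} {t : M j} (ha : a ≠ 1) (hb : b ≠ 1) (ht : t ≠ 1) :
    ⁅(of a : CoprodI M), of t * of b * (of t)⁻¹⁆ ≠ 1 := by
  let w : NeWord M i j :=
    .append (.singleton a ha) hij <| .append (.singleton t ht) hij.symm <|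
    .append (.singleton b hb) hij <| .append (.singleton t⁻¹ (inv_ne_one.2 ht)) hij.symm <|
    .append (.singleton a⁻¹ (inv_ne_one.2 ha)) hij <| .append (.singleton t ht) hij.symm <|
    .append (.singleton b⁻¹ (inv_ne_one.2 hb)) hij <| .singleton t⁻¹ (inv_ne_one.2 ht)
  have hw : w.prod = ⁅(of a : CoprodI M), of t * of b * (of t)⁻¹⁆ := by
    simp [w, commutatorElement_def, mul_assoc]
  exact hw ▸ w.prod_ne_one

end Monoid.CoprodI

open Monoid

section

variable {ℓ m : ℕ}

theorem evalWord_inl (g : Fin ℓ → G) (c : G) : evalWord g (Coprod.inl c) = c := by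
  simp [evalWord]

theorem evalWord_inr_of (g : Fin ℓ → G) (i : Fin ℓ) :
    evalWord g (Coprod.inr (FreeGroup.of i)) = g i := by
  simp [evalWord]

theorem evalWord_map (f : Fin ℓ → Fin m) (g : Fin m → G) (w : Coprod G (FreeGroup (Fin ℓ))) :
    evalWord g (Coprod.map (MonoidHom.id G) (FreeGroup.map f) w) = evalWord (g ∘ f) w := by
  suffices h : (evalWord g).comp (Coprod.map (MonoidHom.id G) (FreeGroup.map f)) =
      evalWord (g ∘ f) from DFunLike.congr_fun h w
  ext <;> simp [evalWord]

def freshCommutator (u w : Coprod G (FreeGroup (Fin ℓ))) : Coprod G (FreeGroup (Fin (ℓ + 1))) :=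
  ⁅Coprod.map (MonoidHom.id G) (FreeGroup.map Fin.castSucc) u,
    Coprod.inr (FreeGroup.of (Fin.last ℓ)) *
      Coprod.map (MonoidHom.id G) (FreeGroup.map Fin.castSucc) w *
      (Coprod.inr (FreeGroup.of (Fin.last ℓ)))⁻¹⁆

theorem evalWord_freshCommutator (g : Fin (ℓ + 1) → G) (u w : Coprod G (FreeGroup (Fin ℓ))) :
    evalWord g (freshCommutator u w) =
      ⁅evalWord (g ∘ Fin.castSucc) u,
        g (Fin.last ℓ) * evalWord (g ∘ Fin.castSucc) w * (g (Fin.last ℓ))⁻¹⁆ := by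
  simp only [freshCommutator, map_commutatorElement, map_mul, map_inv, evalWord_map,
    evalWord_inr_of]

theorem evalWord_ne_one_of_evalWord_freshCommutator_ne_one {g : Fin (ℓ + 1) → G}
    {u w : Coprod G (FreeGroup (Fin ℓ))} (h : evalWord g (freshCommutator u w) ≠ 1) :
    evalWord (g ∘ Fin.castSucc) u ≠ 1 ∧ evalWord (g ∘ Fin.castSucc) w ≠ 1 := by
  rw [evalWord_freshCommutator] at h
  constructor <;> intro h1 <;> simp [h1] at h

theorem freshCommutator_ne_one {u w : Coprod G (FreeGroup (Fin ℓ))} (hu : u ≠ 1) (hw : w ≠ 1) :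
    freshCommutator u w ≠ 1 := by
  -- Sending the fresh variable to `w` in a second copy of `G ∗ F_ℓ` makes the image a reduced
  -- word of length 8 in `(G ∗ F_ℓ) ∗ (G ∗ F_ℓ)`.
  let ι (b : Bool) := CoprodI.of (M := fun _ : Bool => Coprod G (FreeGroup (Fin ℓ))) (i := b)
  let σ : Coprod G (FreeGroup (Fin (ℓ + 1))) →*
      CoprodI fun _ : Bool => Coprod G (FreeGroup (Fin ℓ)) :=
    Coprod.lift ((ι false).comp Coprod.inl) <| FreeGroup.lift <|
      Fin.lastCases (ι true w) fun i => ι false (Coprod.inr (FreeGroup.of i))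
  have hσ : σ.comp (Coprod.map (MonoidHom.id G) (FreeGroup.map Fin.castSucc)) = ι false := by
    ext <;> simp [σ]
  have hσc : σ (freshCommutator u w) = ⁅ι false u, ι true w * ι false w * (ι true w)⁻¹⁆ := by
    simp only [freshCommutator, map_commutatorElement, map_mul, map_inv, ← MonoidHom.comp_apply,
      hσ]
    simp [σ]
  intro h
  refine CoprodI.commutatorElement_of_conj_of_ne_one (M := fun _ => Coprod G (FreeGroup (Fin ℓ)))
    Bool.false_ne_true hu hw hw ?_
  rw [← hσc, h, map_one]

theorem exists_evalWord_ne_one (hmif : ¬ HasMixedIdentity G)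
    {w : Coprod G (FreeGroup (Fin ℓ))} (hw : w ≠ 1) : ∃ g : Fin ℓ → G, evalWord g w ≠ 1 := by
  by_cases hconst : w ∈ (Coprod.inl : G →* Coprod G (FreeGroup (Fin ℓ))).range
  · obtain ⟨c, rfl⟩ := hconst
    refine ⟨1, ?_⟩
    rw [evalWord_inl]
    rintro rfl
    exact hw (map_one _)
  · by_contra! h
    exact hmif ⟨ℓ, w, hconst, h⟩

theorem exists_forall_evalWord_ne_one_of_freshCommutator
    {S : Finset (Coprod G (FreeGroup (Fin ℓ)))} {w : Coprod G (FreeGroup (Fin ℓ))}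
    (hT : ∃ v ∈ S, v ≠ w)
    (h : ∃ g : Fin (ℓ + 1) → G, ∀ u ∈ S, u ≠ w → evalWord g (freshCommutator u w) ≠ 1) :
    ∃ g : Fin ℓ → G, ∀ u ∈ S, evalWord g u ≠ 1 := by
  obtain ⟨g, hg⟩ := h
  refine ⟨g ∘ Fin.castSucc, fun u hu => ?_⟩
  obtain rfl | hne := eq_or_ne u w
  · obtain ⟨v, hv, hvu⟩ := hT
    exact (evalWord_ne_one_of_evalWord_freshCommutator_ne_one (hg v hv hvu)).2
  · exact (evalWord_ne_one_of_evalWord_freshCommutator_ne_one (hg u hu hne)).1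

end

theorem mif_implies_free_product_is_limit_general
    (hmif : ¬ HasMixedIdentity G) (n : ℕ)
    (S : Finset (Monoid.Coprod G (FreeGroup (Fin n))))
    (hS : ∀ w ∈ S, w ≠ 1) :
    ∃ g : Fin n → G, ∀ w ∈ S, evalWord g w ≠ 1 := by
  classical
  induction hk : S.card using Nat.strong_induction_on generalizing n S with
  | _ k ih =>
  obtain rfl | ⟨w, hw⟩ := S.eq_empty_or_nonempty
  · exact ⟨1, by simp⟩
  by_cases hT : ∃ v ∈ S, v ≠ w
  · let T := (S.erase w).image (freshCommutator · w)
    have hT_ne_one : ∀ c ∈ T, c ≠ 1 := Finset.forall_mem_image.2 fun u hu =>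
      freshCommutator_ne_one (hS u (Finset.mem_of_mem_erase hu)) (hS w hw)
    have hT_card : T.card < k :=
      hk ▸ Finset.card_image_le.trans_lt (Finset.card_erase_lt_of_mem hw)
    obtain ⟨g, hg⟩ := ih _ hT_card (n + 1) T hT_ne_one rfl
    exact exists_forall_evalWord_ne_one_of_freshCommutator hT
      ⟨g, fun u hu hne => hg _ (Finset.mem_image_of_mem _ (Finset.mem_erase.2 ⟨hne, hu⟩))⟩
  · push Not at hT
    obtain ⟨g, hg⟩ := exists_evalWord_ne_one hmif (hS w hw)
    exact ⟨g, fun u hu => hT u hu ▸ hg⟩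

/-- **Statement 6.** If `G` is mixed identity free then for every `n ≥ 1` and every finite set
`S` of nontrivial elements of `G ∗ F_n` there is a tuple `(g₁,…,g_n) ∈ G^n` whose evaluation
homomorphism `G ∗ F_n → G` sends no element of `S` to `1`. (Hence `G ∗ F_n` is a limit group
over `G`.) -/
theorem mif_implies_free_product_is_limit
    (hmif : ¬ HasMixedIdentity G) (n : ℕ) (hn : 1 ≤ n)
    (S : Finset (Monoid.Coprod G (FreeGroup (Fin n))))
    (hS : ∀ w ∈ S, w ≠ 1) :
    ∃ g : Fin n → G, ∀ w ∈ S, evalWord g w ≠ 1 :=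
  mif_implies_free_product_is_limit_general hmif n S hS

end
end

section
/- The group A(ℚ) of all order-automorphisms of (ℚ, <), acting on ℚ equipped with the topology induced from ℝ, has no global fixed points and hereditarily separates ℚ: for every infinite open subset Z ⊆ ℚ, every finite subset Y ⊆ Z, and every point z ∈ Z \ Y, there exists an order-automorphism f of ℚ which fixes every point of (ℚ \ Z) ∪ Y and satisfies f(z) ≠ z. -/
/-!
Translations have no fixed points. Since `Z \ Y` is open, some interval `(z - r, z + r)` lies in
it. The piecewise-linear map that stretches `[z - r, z]` onto `[z - r, z + r/2]` and compresses
`[z, z + r]` onto `[z + r/2, z + r]` is an order-automorphism fixing everything outside that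
interval and moving `z`.
-/

open Set

section Bump

variable {K : Type*} [Field K] [LinearOrder K] [IsStrictOrderedRing K]

def bump (z r x : K) : K :=
  if x ≤ z - r then x
  else if x ≤ z then z - r + 3 / 2 * (x - (z - r))
  else if x ≤ z + r then z + r / 2 + (x - z) / 2
  else x

def bumpInv (z r y : K) : K :=
  if y ≤ z - r then y
  else if y ≤ z + r / 2 then z - r + 2 / 3 * (y - (z - r))
  else if y ≤ z + r then z + 2 * (y - (z + r / 2))
  else y

variable {z r : K}

theorem bump_strictMono (hr : 0 < r) : StrictMono (bump z r) := by
  intro x y hxy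
  unfold bump
  split_ifs <;> linarith

theorem bump_bumpInv (hr : 0 < r) (y : K) : bump z r (bumpInv z r y) = y := by
  unfold bump bumpInv
  split_ifs <;> linarith

def bumpOrderIso (z : K) (hr : 0 < r) : K ≃o K :=
  (bump_strictMono hr).orderIsoOfRightInverse _ (bumpInv z r) (bump_bumpInv hr)

theorem bumpOrderIso_apply_of_notMem (hr : 0 < r) {x : K} (hx : x ∉ Ioo (z - r) (z + r)) :
    bumpOrderIso z hr x = x := by
  rw [mem_Ioo, not_and_or, not_lt, not_lt] at hx
  change bump z r x = x
  unfold bump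
  rcases hx with h | h <;> split_ifs <;> linarith

theorem bumpOrderIso_apply_self (hr : 0 < r) : bumpOrderIso z hr z = z + r / 2 := by
  change bump z r z = _
  unfold bump
  split_ifs <;> linarith

theorem exists_orderIso_eqOn_compl_Ioo (hr : 0 < r) :
    ∃ f : K ≃o K, (∀ x ∉ Ioo (z - r) (z + r), f x = x) ∧ f z ≠ z :=
  ⟨bumpOrderIso z hr, fun _ ↦ bumpOrderIso_apply_of_notMem hr, by
    rw [bumpOrderIso_apply_self]; linarith⟩

end Bump

theorem exists_Ioo_subset_diff_of_finite {K : Type*} [Field K] [LinearOrder K]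
    [IsStrictOrderedRing K] [TopologicalSpace K] [OrderTopology K] {Z Y : Set K} {z : K}
    (hZ : IsOpen Z) (hY : Y.Finite) (hz : z ∈ Z \ Y) :
    ∃ r > 0, Ioo (z - r) (z + r) ⊆ Z \ Y :=
  (nhds_basis_Ioo_pos z).mem_iff.mp ((hZ.sdiff hY.isClosed).mem_nhds hz)

/-- **Statement 7.** The group `A(ℚ)` of order-automorphisms of `(ℚ, <)`, acting on `ℚ` with
its topology induced from `ℝ`, has no global fixed points, and it hereditarily separates `ℚ`:
for every infinite open `Z ⊆ ℚ`, every finite `Y ⊆ Z` and every `z ∈ Z \ Y` there is an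
order-automorphism of `ℚ` fixing `(ℚ \ Z) ∪ Y` pointwise and moving `z`. -/
theorem orderAutQ_hereditarily_separates :
    (∀ x : ℚ, ∃ f : ℚ ≃o ℚ, f x ≠ x) ∧
      (∀ Z : Set ℚ, IsOpen Z → Z.Infinite →
        ∀ Y : Set ℚ, Y ⊆ Z → Y.Finite →
          ∀ z ∈ Z \ Y, ∃ f : ℚ ≃o ℚ, (∀ x ∈ Zᶜ ∪ Y, f x = x) ∧ f z ≠ z) := by
  refine ⟨fun x ↦ ⟨OrderIso.addRight 1, by simp⟩, ?_⟩
  intro Z hZ _ Y _ hY z hz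
  obtain ⟨r, hr, hsub⟩ := exists_Ioo_subset_diff_of_finite hZ hY hz
  obtain ⟨f, hfix, hmove⟩ := exists_orderIso_eqOn_compl_Ioo (z := z) hr
  refine ⟨f, fun x hx ↦ hfix x fun hxI ↦ ?_, hmove⟩
  obtain ⟨hxZ, hxY⟩ := hsub hxI
  exact hx.elim (· hxZ) hxY
end

section
/- Let X be a perfect metric space (a metric space with no isolated points) and let the group G act faithfully on X by homeomorphisms, with finite set of global fixed points Fix(G) = {x ∈ X : g·x = x for all g ∈ G}, such that the action hereditarily separates X. Suppose h ∈ G has infinite order and supp(h^ℓ) = supp(h) for every nonzero integer ℓ, where supp(g) = {x ∈ X : g·x ≠ x}. Then for every finite set S of nontrivial elements of the free group F₂ on two generators a, b, there exists g ∈ G such that the homomorphism F₂ → G determined by a ↦ h, b ↦ g sends no element of S to 1. (Consequently there is a limit group ⟨G, g⟩ over G in which {h, g} is a free basis of a free subgroup of rank 2.) -/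
/-!
Choose `x₀` moved by `h` and an infinite open set `U ∋ x₀` avoiding `Fix(G)` whose translates
`h ^ d • U`, for the finitely many relevant `d ≠ 0`, are disjoint from `U`. Every `w` in the free
group on `a, b` can be written as `N(…, a ^ k * b * (a ^ k)⁻¹, …) * a ^ σ` with `N` in the free
group on `ℤ`. Hereditary separation provides elements `Γ k` supported in `U` for which every
nontrivial `N(Γ)` moves a point of `U`: the letters of `N` are realised one at a time, each one
sending the current point to a fresh point, so the trajectory cannot close up. For
`g = ∏ k, (h ^ k)⁻¹ * Γ k * h ^ k` the conjugate `h ^ k * g * (h ^ k)⁻¹` acts on `U` as `Γ k`, so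
in `w(h, g) = N(…, h ^ k * g * (h ^ k)⁻¹, …) * h ^ σ` the first factor acts on `U` as `N(Γ)`.
If `σ = 0` then `N ≠ 1` moves a point; otherwise `w(h, g) = 1` would put
`h ^ σ • x₀ = N(Γ)⁻¹ • x₀` in `U`.
-/

noncomputable section

/-- The support of a group element acting on a set: the points it moves. -/
def actSupp (G X : Type*) [Group G] [MulAction G X] (g : G) : Set X :=
  {x : X | g • x ≠ x}

/-- A group acting by homeomorphisms hereditarily separates `X` if for every open infinite
`Z ⊆ X`, every finite `Y ⊆ Z` and every `z ∈ Z \ (Y ∪ Fix(G))` there is `g ∈ G` fixing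
`(X \ Z) ∪ Y` pointwise with `g • z ≠ z`. -/
def HereditarilySeparates (G X : Type*) [Group G] [TopologicalSpace X] [MulAction G X] :
    Prop :=
  ∀ Z : Set X, IsOpen Z → Z.Infinite →
    ∀ Y : Set X, Y ⊆ Z → Y.Finite →
      ∀ z ∈ Z \ (Y ∪ MulAction.fixedPoints G X),
        ∃ g : G, (∀ x ∈ Zᶜ ∪ Y, g • x = x) ∧ g • z ≠ z

open MulAction Pointwise Function Topology

section Support

variable {G X : Type*} [Group G] [MulAction G X] {U : Set X}

theorem smul_mem_of_mem_fixingSubgroup_compl {γ : G} (hγ : γ ∈ fixingSubgroup G Uᶜ) {x : X}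
    (hx : x ∈ U) : γ • x ∈ U := by
  by_contra hγx
  rw [(smul_left_cancel_iff γ).1 ((mem_fixingSubgroup_iff G).1 hγ _ hγx)] at hγx
  exact hγx hx

theorem inv_mul_mul_mem_fixingSubgroup_compl {γ : G} (hγ : γ ∈ fixingSubgroup G Uᶜ) (c : G) :
    c⁻¹ * γ * c ∈ fixingSubgroup G (c⁻¹ • U)ᶜ := by
  refine (mem_fixingSubgroup_iff G).2 fun x hx => ?_
  rw [Set.mem_compl_iff, Set.mem_inv_smul_set_iff] at hx
  rw [mul_smul, mul_smul, (mem_fixingSubgroup_iff G).1 hγ _ hx, inv_smul_smul]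

theorem inv_smul_eq_of_forall_smul_eq {ψ γ : G} (hγ : γ ∈ fixingSubgroup G Uᶜ)
    (hψ : ∀ x ∈ U, ψ • x = γ • x) {y : X} (hy : y ∈ U) : ψ⁻¹ • y = γ⁻¹ • y := by
  rw [inv_smul_eq_iff, hψ _ (smul_mem_of_mem_fixingSubgroup_compl (inv_mem hγ) hy),
    smul_inv_smul]

theorem list_prod_map_smul_of_pairwise_disjoint {ι : Type*} {V : ι → Set X} {γ : ι → G}
    (hγ : ∀ i, γ i ∈ fixingSubgroup G (V i)ᶜ) :
    ∀ {l : List ι}, l.Pairwise (Disjoint on V) → ∀ {i}, i ∈ l → ∀ {x}, x ∈ V i →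
      (l.map γ).prod • x = γ i • x
  | [], _, _, hi, _, _ => absurd hi List.not_mem_nil
  | j :: l, hl, i, hi, x, hx => by
    rw [List.pairwise_cons] at hl
    rw [List.map_cons, List.prod_cons, mul_smul]
    rcases List.mem_cons.1 hi with rfl | hi
    · have hfix : (l.map γ).prod ∈ stabilizer G x := by
        refine Subgroup.list_prod_mem _ fun δ hδ => ?_
        obtain ⟨k, hk, rfl⟩ := List.mem_map.1 hδ
        exact (mem_fixingSubgroup_iff G).1 (hγ k) x (Set.disjoint_left.1 (hl.1 k hk) hx)
      rw [mem_stabilizer_iff.1 hfix]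
    · rw [list_prod_map_smul_of_pairwise_disjoint hγ hl.2 hi hx]
      exact (mem_fixingSubgroup_iff G).1 (hγ j) _
        (Set.disjoint_right.1 (hl.1 i hi) (smul_mem_of_mem_fixingSubgroup_compl (hγ i) hx))

end Support

section ZPowConj

variable {H K : Type*} [Group H] [Group K]

def zpowConjLift (x y : H) : FreeGroup ℤ →* H :=
  FreeGroup.lift fun k => x ^ k * y * (x ^ k)⁻¹

@[simp]
theorem zpowConjLift_of (x y : H) (k : ℤ) :
    zpowConjLift x y (FreeGroup.of k) = x ^ k * y * (x ^ k)⁻¹ :=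
  FreeGroup.lift_apply_of

theorem map_zpowConjLift (f : H →* K) (x y : H) (n : FreeGroup ℤ) :
    f (zpowConjLift x y n) = zpowConjLift (f x) (f y) n := by
  rw [← MonoidHom.comp_apply]
  congr 1
  exact FreeGroup.ext_hom _ _ fun k => by simp

theorem zpow_mul_zpowConjLift_mul_inv (x y : H) (m : ℤ) (n : FreeGroup ℤ) :
    x ^ m * zpowConjLift x y n * (x ^ m)⁻¹ = zpowConjLift x y (FreeGroup.map (· + m) n) := by
  rw [← MulAut.conj_apply, ← MulEquiv.coe_toMonoidHom, ← MonoidHom.comp_apply,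
    ← MonoidHom.comp_apply]
  congr 1
  refine FreeGroup.ext_hom _ _ fun k => ?_
  simp only [MonoidHom.comp_apply, zpowConjLift_of, FreeGroup.map.of, MulEquiv.coe_toMonoidHom,
    MulAut.conj_apply, zpow_add]
  group

theorem exists_eq_zpowConjLift_mul_zpow (w : FreeGroup (Fin 2)) :
    ∃ (n : FreeGroup ℤ) (s : ℤ), w = zpowConjLift (.of 0) (.of 1) n * .of 0 ^ s := by
  induction w with
  | C1 => exact ⟨1, 0, by simp⟩
  | of i =>
    fin_cases i
    · exact ⟨1, 1, by simp⟩
    · exact ⟨.of 0, 0, by simp⟩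
  | inv_of i _ =>
    fin_cases i
    · exact ⟨1, -1, by simp⟩
    · exact ⟨(.of 0)⁻¹, 0, by simp⟩
  | mul w w' hw hw' =>
    obtain ⟨n, s, rfl⟩ := hw
    obtain ⟨n', s', rfl⟩ := hw'
    refine ⟨n * FreeGroup.map (· + s) n', s + s', ?_⟩
    rw [map_mul, ← zpow_mul_zpowConjLift_mul_inv, zpow_add]
    group

end ZPowConj

def MovesOffFiniteSets (G : Type*) {X : Type*} [Group G] [MulAction G X] (U : Set X) : Prop :=
  ∀ F : Set X, F.Finite → ∀ v ∈ U, ∃ c ∈ fixingSubgroup G (Uᶜ ∪ F \ {v}), c • v ∉ F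

theorem MovesOffFiniteSets.exists_mem_notMem {G X : Type*} [Group G] [MulAction G X] {U : Set X}
    (hU : MovesOffFiniteSets G U) (hUne : U.Nonempty) {F : Set X} (hF : F.Finite) :
    ∃ p ∈ U, p ∉ F := by
  obtain ⟨u, hu⟩ := hUne
  obtain ⟨c, hc, hcu⟩ := hU F hF u hu
  exact ⟨c • u, smul_mem_of_mem_fixingSubgroup_compl
    (fixingSubgroup_antitone G X Set.subset_union_left hc) hu, hcu⟩

section Constraints

variable {G X α : Type*} [Group G] [MulAction G X]

def evalLetter (Γ : α → G) (ℓ : α × Bool) : G := cond ℓ.2 (Γ ℓ.1) (Γ ℓ.1)⁻¹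

theorem lift_mk_cons (Γ : α → G) (ℓ : α × Bool) (L : List (α × Bool)) :
    FreeGroup.lift Γ (FreeGroup.mk (ℓ :: L)) =
      evalLetter Γ ℓ * FreeGroup.lift Γ (FreeGroup.mk L) := by
  simp only [FreeGroup.lift_mk, List.map_cons, List.prod_cons, evalLetter]

theorem evalLetter_mem {S : Subgroup G} {Γ : α → G} (hΓ : ∀ a, Γ a ∈ S) (ℓ : α × Bool) :
    evalLetter Γ ℓ ∈ S := by
  cases h : ℓ.2 <;> simp [evalLetter, h, hΓ]

def Satisfies (Γ : α → G) (C : Set (α × X × X)) : Prop :=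
  ∀ e ∈ C, Γ e.1 • e.2.1 = e.2.2

theorem Satisfies.mono {Γ : α → G} {C C' : Set (α × X × X)} (h : Satisfies Γ C') (hC : C ⊆ C') :
    Satisfies Γ C :=
  fun e he => h e (hC he)

def arrowPoints (C : Set (α × X × X)) : Set X :=
  (fun e => e.2.1) '' C ∪ (fun e => e.2.2) '' C

theorem Set.Finite.arrowPoints {C : Set (α × X × X)} (hC : C.Finite) : (arrowPoints C).Finite :=
  (hC.image _).union (hC.image _)

/-- The constraint that the letter `ℓ` maps `x` to `y`: an inverse letter `(a, false)` is
recorded as the reversed arrow of `a`. -/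
def letterArrow (ℓ : α × Bool) (x y : X) : α × X × X := cond ℓ.2 (ℓ.1, x, y) (ℓ.1, y, x)

@[simp]
theorem letterArrow_fst (ℓ : α × Bool) (x y : X) : (letterArrow ℓ x y).1 = ℓ.1 := by
  obtain ⟨a, b⟩ := ℓ
  cases b <;> rfl

theorem letterArrow_mem_arrowPoints {C : Set (α × X × X)} {ℓ : α × Bool} {x y : X}
    (h : letterArrow ℓ x y ∈ C) :
    x ∈ arrowPoints C ∧ y ∈ arrowPoints C := by
  cases hb : ℓ.2 <;> simp only [letterArrow, hb, cond_true, cond_false] at h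
  · exact ⟨Or.inr ⟨_, h, rfl⟩, Or.inl ⟨_, h, rfl⟩⟩
  · exact ⟨Or.inl ⟨_, h, rfl⟩, Or.inr ⟨_, h, rfl⟩⟩

theorem letterArrow_injective {ℓ : α × Bool} {x x' y y' : X}
    (h : letterArrow ℓ x y = letterArrow ℓ x' y') : x = x' := by
  cases hb : ℓ.2 <;> simp_all [letterArrow]

theorem exists_letterArrow_eq {ℓ : α × Bool} {e : α × X × X} (he : e.1 = ℓ.1) :
    ∃ x y : X, e = letterArrow ℓ x y := by
  obtain ⟨a, s, t⟩ := e
  cases hb : ℓ.2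
  · exact ⟨t, s, by simp_all [letterArrow]⟩
  · exact ⟨s, t, by simp_all [letterArrow]⟩

theorem smul_letterArrow_iff {Γ : α → G} {ℓ : α × Bool} {x y : X} :
    Γ (letterArrow ℓ x y).1 • (letterArrow ℓ x y).2.1 = (letterArrow ℓ x y).2.2 ↔
      evalLetter Γ ℓ • x = y := by
  cases hb : ℓ.2
  · simp [letterArrow, evalLetter, hb, inv_smul_eq_iff, eq_comm (a := x)]
  · simp [letterArrow, evalLetter, hb]

variable {U : Set X}

theorem exists_satisfies_evalLetter_smul_not_mem (hU : MovesOffFiniteSets G U) {Γ : α → G}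
    (hΓ : ∀ a, Γ a ∈ fixingSubgroup G Uᶜ) {C : Set (α × X × X)} (hC : C.Finite)
    (hΓC : Satisfies Γ C) {ℓ : α × Bool} {v : X} (hv : v ∈ U) (hfree : ∀ y, letterArrow ℓ v y ∉ C)
    {F : Set X} (hF : F.Finite) :
    ∃ Γ' : α → G, (∀ a, Γ' a ∈ fixingSubgroup G Uᶜ) ∧ Satisfies Γ' C ∧
      evalLetter Γ' ℓ • v ∉ F := by
  classical
  -- Replace the value `δ` of the letter by `δ * c`, where `c` fixes every point at which `δ` is
  -- constrained and pushes `v` off `δ⁻¹ • F`.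
  set δ := evalLetter Γ ℓ
  set A : Set X := {x | ∃ y, letterArrow ℓ x y ∈ C}
  have hA : A.Finite := hC.arrowPoints.subset fun x ⟨y, hy⟩ => (letterArrow_mem_arrowPoints hy).1
  obtain ⟨c, hc, hcv⟩ := hU (A ∪ δ⁻¹ • F) (hA.union hF.smul_set) v hv
  have hcU : c ∈ fixingSubgroup G Uᶜ := fixingSubgroup_antitone G X Set.subset_union_left hc
  set Γ' := Function.update Γ ℓ.1 (cond ℓ.2 (δ * c) (δ * c)⁻¹)
  have hΓ' : evalLetter Γ' ℓ = δ * c := by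
    cases hb : ℓ.2 <;> simp [Γ', evalLetter, hb]
  refine ⟨Γ', fun a => ?_, fun e he => ?_, ?_⟩
  · by_cases ha : a = ℓ.1
    · subst ha
      have : δ * c ∈ fixingSubgroup G Uᶜ := mul_mem (evalLetter_mem hΓ ℓ) hcU
      simp only [Γ', update_self]
      cases ℓ.2
      exacts [inv_mem this, this]
    · simp [Γ', ha, hΓ]
  · by_cases ha : e.1 = ℓ.1
    · obtain ⟨x, y, rfl⟩ := exists_letterArrow_eq ha
      have hxv : x ≠ v := by rintro rfl; exact hfree y he
      rw [smul_letterArrow_iff, hΓ', mul_smul,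
        (mem_fixingSubgroup_iff G).1 hc x (Or.inr ⟨Or.inl ⟨y, he⟩, hxv⟩)]
      exact smul_letterArrow_iff.1 (hΓC _ he)
    · simp only [Γ', Function.update_of_ne ha]
      exact hΓC e he
  · rw [hΓ', mul_smul]
    exact fun h => hcv (Or.inr (Set.mem_inv_smul_set_iff.2 h))

theorem exists_satisfies_lift_mk_smul_eq (hU : MovesOffFiniteSets G U) {L : List (α × Bool)}
    (hL : FreeGroup.IsReduced L) {Γ : α → G} (hΓ : ∀ a, Γ a ∈ fixingSubgroup G Uᶜ)
    {C : Set (α × X × X)} (hC : C.Finite) (hΓC : Satisfies Γ C) {p : X} (hp : p ∈ U)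
    (hpC : p ∉ arrowPoints C) :
    ∃ (Γ' : α → G) (C' : Set (α × X × X)) (v : X), (∀ a, Γ' a ∈ fixingSubgroup G Uᶜ) ∧
      C'.Finite ∧ Satisfies Γ' C' ∧ C ⊆ C' ∧ v ∈ U ∧ (L ≠ [] → v ≠ p) ∧
      (∀ ℓ, FreeGroup.IsReduced (ℓ :: L) → ∀ y, letterArrow ℓ v y ∉ C') ∧
      ∀ Γ'' : α → G, Satisfies Γ'' C' → FreeGroup.lift Γ'' (FreeGroup.mk L) • p = v := by
  -- The endpoint `v` stays unconstrained for every letter that may follow `L`: the only arrow at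
  -- `v` is the last one, and reducedness forbids following it back.
  induction L with
  | nil =>
    exact ⟨Γ, C, p, hΓ, hC, hΓC, subset_rfl, hp, fun h => absurd rfl h,
      fun ℓ _ y hy => hpC (letterArrow_mem_arrowPoints hy).1, fun _ _ => by simp⟩
  | cons ℓ L ih =>
    obtain ⟨Γ₁, C₁, v, hΓ₁, hC₁, hΓ₁C₁, hCC₁, hv, -, hfree, heval⟩ := ih hL.tail
    obtain ⟨Γ₂, hΓ₂, hΓ₂C₁, hw⟩ := exists_satisfies_evalLetter_smul_not_mem hU hΓ₁ hC₁ hΓ₁C₁ hv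
      (hfree ℓ hL) ((hC₁.arrowPoints.insert v).insert p)
    set w := evalLetter Γ₂ ℓ • v
    simp only [Set.mem_insert_iff, not_or] at hw
    obtain ⟨hwp, hwv, hwC₁⟩ := hw
    refine ⟨Γ₂, insert (letterArrow ℓ v w) C₁, w, hΓ₂, hC₁.insert _, ?_,
      hCC₁.trans (Set.subset_insert _ _),
      smul_mem_of_mem_fixingSubgroup_compl (evalLetter_mem hΓ₂ ℓ) hv, fun _ => hwp, ?_, ?_⟩
    · exact Set.forall_mem_insert.2 ⟨smul_letterArrow_iff.2 rfl, hΓ₂C₁⟩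
    · intro ℓ' hred y hy
      rcases Set.mem_insert_iff.1 hy with heq | hy
      · have hfst : ℓ'.1 = ℓ.1 := by simpa using congrArg Prod.fst heq
        have hℓ : ℓ' = ℓ := Prod.ext hfst ((FreeGroup.isReduced_cons_cons.1 hred).1 hfst)
        subst hℓ
        exact hwv (letterArrow_injective heq)
      · exact hwC₁ (letterArrow_mem_arrowPoints hy).1
    · intro Γ'' hΓ''
      rw [lift_mk_cons, mul_smul, heval Γ'' (hΓ''.mono (Set.subset_insert _ _))]
      exact smul_letterArrow_iff.1 (hΓ'' _ (Set.mem_insert _ _))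

theorem exists_satisfies_forall_lift_smul_ne (hU : MovesOffFiniteSets G U) (hUne : U.Nonempty)
    (W : Finset (FreeGroup α)) :
    ∃ (Γ : α → G) (C : Set (α × X × X)), (∀ a, Γ a ∈ fixingSubgroup G Uᶜ) ∧ C.Finite ∧
      Satisfies Γ C ∧ ∀ w ∈ W, w ≠ 1 →
        ∃ p ∈ U, ∀ Γ' : α → G, Satisfies Γ' C → FreeGroup.lift Γ' w • p ≠ p := by
  classical
  induction W using Finset.induction_on with
  | empty => exact ⟨1, ∅, fun _ => one_mem _, Set.finite_empty, fun _ => False.elim, by simp⟩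
  | insert w W _ ih =>
    obtain ⟨Γ, C, hΓ, hC, hΓC, hW⟩ := ih
    obtain ⟨p, hp, hpC⟩ := hU.exists_mem_notMem hUne hC.arrowPoints
    obtain ⟨Γ', C', v, hΓ', hC', hΓ'C', hCC', -, hvp, -, heval⟩ :=
      exists_satisfies_lift_mk_smul_eq hU FreeGroup.isReduced_toWord hΓ hC hΓC hp hpC
    refine ⟨Γ', C', hΓ', hC', hΓ'C', fun w' hw' hw'1 => ?_⟩
    rcases Finset.mem_insert.1 hw' with rfl | hw'
    · refine ⟨p, hp, fun Γ'' hΓ'' => ?_⟩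
      rw [← FreeGroup.mk_toWord (x := w'), heval Γ'' hΓ'']
      exact hvp (mt FreeGroup.toWord_eq_nil_iff.1 hw'1)
    · obtain ⟨p, hp, hpW⟩ := hW w' hw' hw'1
      exact ⟨p, hp, fun Γ'' hΓ'' => hpW Γ'' (hΓ''.mono hCC')⟩

theorem exists_forall_lift_smul_ne (hU : MovesOffFiniteSets G U) (hUne : U.Nonempty)
    (W : Finset (FreeGroup α)) :
    ∃ Γ : α → G, (∀ a, Γ a ∈ fixingSubgroup G Uᶜ) ∧
      ∀ w ∈ W, w ≠ 1 → ∃ p ∈ U, FreeGroup.lift Γ w • p ≠ p := by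
  obtain ⟨Γ, C, hΓ, -, hΓC, hW⟩ := exists_satisfies_forall_lift_smul_ne hU hUne W
  exact ⟨Γ, hΓ, fun w hw hw1 =>
    let ⟨p, hp, hpW⟩ := hW w hw hw1
    ⟨p, hp, hpW Γ hΓC⟩⟩

end Constraints

section Application

variable {G X : Type*} [Group G] [MulAction G X]

theorem HereditarilySeparates.movesOffFiniteSets [TopologicalSpace X] [T1Space X]
    (hsep : HereditarilySeparates G X) {U : Set X} (hUo : IsOpen U) (hUi : U.Infinite)
    (hUfix : Disjoint U (fixedPoints G X)) : MovesOffFiniteSets G U := by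
  intro F hF v hv
  have hFv : (F \ {v}).Finite := hF.sdiff
  obtain ⟨c, hc, hcv⟩ := hsep (U \ (F \ {v})) (hUo.sdiff hFv.isClosed) (hUi.sdiff hFv) ∅
    (Set.empty_subset _) Set.finite_empty v
    ⟨⟨hv, fun h => h.2 rfl⟩, by simpa using Set.disjoint_left.1 hUfix hv⟩
  have hcZ : c ∈ fixingSubgroup G (U \ (F \ {v}))ᶜ :=
    (mem_fixingSubgroup_iff G).2 fun x hx => hc x (Or.inl hx)
  refine ⟨c, by rwa [Set.compl_sdiff, Set.union_comm] at hcZ, fun hcF => ?_⟩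
  exact (smul_mem_of_mem_fixingSubgroup_compl hcZ ⟨hv, fun h => h.2 rfl⟩).2 ⟨hcF, hcv⟩

theorem exists_isOpen_subset_forall_disjoint_smul [TopologicalSpace X] [T2Space X]
    {T : Finset G} (hcont : ∀ γ ∈ T, Continuous fun x : X => γ • x) {x₀ : X}
    (hT : ∀ γ ∈ T, γ • x₀ ≠ x₀) {s : Set X} (hs : s ∈ 𝓝 x₀) :
    ∃ U : Set X, IsOpen U ∧ x₀ ∈ U ∧ U ⊆ s ∧ ∀ γ ∈ T, Disjoint U (γ • U) := by
  have hev : ∀ᶠ q : X × X in 𝓝 x₀ ×ˢ 𝓝 x₀, ∀ γ ∈ T, γ • q.1 ≠ q.2 := by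
    rw [← nhds_prod_eq]
    exact Filter.eventually_all_finset _ |>.2 fun γ hγ =>
      (((hcont γ hγ).comp continuous_fst).continuousAt.ne_iff_eventually_ne
        continuous_snd.continuousAt).1 (hT γ hγ)
  obtain ⟨t, ht, htT⟩ := Filter.eventually_prod_self_iff'.1 hev
  refine ⟨interior (t ∩ s), isOpen_interior, mem_interior_iff_mem_nhds.2 (Filter.inter_mem ht hs),
    interior_subset.trans Set.inter_subset_right, fun γ hγ => Set.disjoint_left.2 ?_⟩
  rintro _ hy ⟨x, hx, rfl⟩
  exact htT x (interior_subset hx).1 _ (interior_subset hy).1 γ hγ rfl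

theorem exists_isOpen_infinite_forall_disjoint_zpow_smul [TopologicalSpace X] [T2Space X]
    [FaithfulSMul G X] (hperf : ∀ x : X, x ∈ closure ({x}ᶜ : Set X))
    (hcont : ∀ g : G, Continuous fun x : X => g • x) (hfix : (fixedPoints G X).Finite)
    {h : G} (hh : h ≠ 1) (hsupp : ∀ ℓ : ℤ, ℓ ≠ 0 → actSupp G X (h ^ ℓ) = actSupp G X h)
    (D : Finset ℤ) :
    ∃ U : Set X, IsOpen U ∧ U.Infinite ∧ Disjoint U (fixedPoints G X) ∧
      ∀ d ∈ D, d ≠ 0 → Disjoint U (h ^ d • U) := by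
  classical
  obtain ⟨x₀, hx₀⟩ := (Set.ne_univ_iff_exists_notMem _).1
    (fixedBy_eq_univ_iff_eq_one.not.2 hh : fixedBy X h ≠ _)
  have hDx₀ : ∀ γ ∈ (D.filter (· ≠ 0)).image (h ^ ·), γ • x₀ ≠ x₀ := by
    intro γ hγ
    obtain ⟨d, hd, rfl⟩ := Finset.mem_image.1 hγ
    have hx₀d : x₀ ∈ actSupp G X (h ^ d) := by rw [hsupp d (Finset.mem_filter.1 hd).2]; exact hx₀
    exact hx₀d
  obtain ⟨U, hUo, hx₀U, hUfix, hUD⟩ := exists_isOpen_subset_forall_disjoint_smul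
    (fun γ _ => hcont γ) hDx₀ (hfix.isClosed.isOpen_compl.mem_nhds fun hx => hx₀ (hx h))
  have := mem_closure_iff_nhdsWithin_neBot.1 (hperf x₀)
  exact ⟨U, hUo, infinite_of_mem_nhds x₀ (hUo.mem_nhds hx₀U),
    Set.subset_compl_iff_disjoint_right.1 hUfix,
    fun d hd hd0 => hUD _ (Finset.mem_image_of_mem _ (Finset.mem_filter.2 ⟨hd, hd0⟩))⟩

theorem lift_mk_smul_eq_of_forall_mem {α : Type*} {U : Set X} {Φ Γ : α → G}
    (hΓ : ∀ a, Γ a ∈ fixingSubgroup G Uᶜ) {L : List (α × Bool)}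
    (hL : ∀ ℓ ∈ L, ∀ x ∈ U, Φ ℓ.1 • x = Γ ℓ.1 • x) {x : X} (hx : x ∈ U) :
    FreeGroup.lift Φ (FreeGroup.mk L) • x = FreeGroup.lift Γ (FreeGroup.mk L) • x := by
  induction L with
  | nil => simp
  | cons ℓ L ih =>
    have hΓL : FreeGroup.lift Γ (FreeGroup.mk L) ∈ fixingSubgroup G Uᶜ :=
      FreeGroup.range_lift_le (Set.range_subset_iff.2 hΓ) ⟨_, rfl⟩
    rw [lift_mk_cons, lift_mk_cons, mul_smul, mul_smul, ih fun ℓ' hℓ' => hL ℓ' (.tail _ hℓ')]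
    have hy := smul_mem_of_mem_fixingSubgroup_compl hΓL hx
    have hℓ := hL ℓ List.mem_cons_self
    cases hb : ℓ.2
    · simp only [evalLetter, hb, cond_false]
      exact inv_smul_eq_of_forall_smul_eq (hΓ ℓ.1) hℓ hy
    · simp only [evalLetter, hb, cond_true]
      exact hℓ _ hy

theorem exists_forall_zpowConjLift_smul_eq {U : Set X} {h : G} {L : Finset ℤ}
    (hU : ∀ j ∈ L, ∀ k ∈ L, j ≠ k → Disjoint U (h ^ (j - k) • U)) {Γ : ℤ → G}
    (hΓ : ∀ k, Γ k ∈ fixingSubgroup G Uᶜ) {W : Finset (FreeGroup ℤ)}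
    (hW : ∀ n ∈ W, ∀ ℓ ∈ n.toWord, ℓ.1 ∈ L) :
    ∃ g : G, ∀ n ∈ W, ∀ x ∈ U, zpowConjLift h g n • x = FreeGroup.lift Γ n • x := by
  have hdisj : L.toList.Pairwise (Disjoint on fun k => (h ^ k)⁻¹ • U) := by
    refine L.nodup_toList.pairwise_of_forall_ne fun j hj k hk hjk => ?_
    have hkj : (h ^ k)⁻¹ = (h ^ j)⁻¹ * h ^ (j - k) := by group
    rw [onFun, hkj, mul_smul, Set.disjoint_smul_set]
    exact hU j (L.mem_toList.1 hj) k (L.mem_toList.1 hk) hjk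
  -- The factors have disjoint supports `(h ^ k)⁻¹ • U`, on which `g` acts as the `k`-th one.
  refine ⟨(L.toList.map fun k => (h ^ k)⁻¹ * Γ k * h ^ k).prod, fun n hn x hx => ?_⟩
  rw [← FreeGroup.mk_toWord (x := n)]
  refine lift_mk_smul_eq_of_forall_mem hΓ (fun ℓ hℓ y hy => ?_) hx
  rw [mul_smul, mul_smul, list_prod_map_smul_of_pairwise_disjoint
    (fun k => inv_mul_mul_mem_fixingSubgroup_compl (hΓ k) (h ^ k)) hdisj
    (L.mem_toList.2 (hW n hn ℓ hℓ)) (Set.smul_mem_smul_set_iff.2 hy)]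
  simp [mul_smul]

theorem mul_ne_one_of_disjoint_smul {U : Set X} (hU : U.Nonempty) {ψ γ t : G}
    (hγ : γ ∈ fixingSubgroup G Uᶜ) (hψ : ∀ x ∈ U, ψ • x = γ • x) (ht : Disjoint U (t • U)) :
    ψ * t ≠ 1 := by
  intro hψt
  obtain ⟨x, hx⟩ := hU
  have htx : t • x = γ⁻¹ • x := by
    rw [eq_inv_of_mul_eq_one_right hψt, inv_smul_eq_of_forall_smul_eq hγ hψ hx]
  exact Set.disjoint_left.1 ht (htx ▸ smul_mem_of_mem_fixingSubgroup_compl (inv_mem hγ) hx)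
    (Set.smul_mem_smul_set hx)

end Application

/-- **Statement 9.** Let the group `G` act faithfully by homeomorphisms on a perfect metric
space `X` (no isolated points), with finitely many global fixed points, such that the action
hereditarily separates `X`. If `h ∈ G` has infinite order and `supp (h^ℓ) = supp h` for every
`ℓ ≠ 0`, then for every finite set `S` of nontrivial elements of the free group on `a, b` there
is `g ∈ G` such that the homomorphism `F₂ → G`, `a ↦ h`, `b ↦ g`, kills no element of `S`.
(Hence `{h, g}` freely generates a free subgroup in a suitable limit group over `G`.) -/
theorem exists_free_pair_of_hereditarilySeparates
    {G X : Type*} [Group G] [MetricSpace X] [MulAction G X] [FaithfulSMul G X]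
    (hperf : ∀ x : X, x ∈ closure ({x}ᶜ : Set X))
    (hcont : ∀ g : G, Continuous fun x : X => g • x)
    (hfix : (MulAction.fixedPoints G X).Finite)
    (hsep : HereditarilySeparates G X)
    (h : G) (hord : ∀ n : ℕ, 0 < n → h ^ n ≠ 1)
    (hsupp : ∀ ℓ : ℤ, ℓ ≠ 0 → actSupp G X (h ^ ℓ) = actSupp G X h)
    (S : Finset (FreeGroup (Fin 2))) (hS : ∀ w ∈ S, w ≠ 1) :
    ∃ g : G, ∀ w ∈ S, FreeGroup.lift ![h, g] w ≠ 1 := by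
  classical
  choose N σ hNσ using exists_eq_zpowConjLift_mul_zpow
  set L : Finset ℤ := (S.image N).biUnion fun n => (n.toWord.map Prod.fst).toFinset
  obtain ⟨U, hUo, hUi, hUfix, hUD⟩ := exists_isOpen_infinite_forall_disjoint_zpow_smul hperf hcont
    hfix (by simpa using hord 1 one_pos) hsupp (S.image σ ∪ (L ×ˢ L).image fun jk => jk.1 - jk.2)
  obtain ⟨Γ, hΓ, hΓS⟩ := exists_forall_lift_smul_ne (hsep.movesOffFiniteSets hUo hUi hUfix)
    hUi.nonempty (S.image N)
  obtain ⟨g, hg⟩ := exists_forall_zpowConjLift_smul_eq (fun j hj k hk hjk => hUD _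
      (Finset.mem_union_right _ (Finset.mem_image.2 ⟨(j, k), Finset.mem_product.2 ⟨hj, hk⟩, rfl⟩))
      (sub_ne_zero.2 hjk)) hΓ
    fun n hn ℓ hℓ => Finset.mem_biUnion.2 ⟨n, hn, List.mem_toFinset.2 (List.mem_map_of_mem hℓ)⟩
  refine ⟨g, fun w hw hw1 => ?_⟩
  have hagree := hg (N w) (Finset.mem_image_of_mem N hw)
  rw [hNσ w] at hw1
  simp only [map_mul, map_zpow, map_zpowConjLift, FreeGroup.lift_apply_of, Matrix.cons_val_zero,
    Matrix.cons_val_one] at hw1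
  by_cases hσ : σ w = 0
  · rw [hσ, zpow_zero, mul_one] at hw1
    obtain ⟨p, hp, hpN⟩ := hΓS (N w) (Finset.mem_image_of_mem N hw)
      fun hN => hS w hw (by rw [hNσ w, hN, hσ]; simp)
    exact hpN (by rw [← hagree p hp, hw1, one_smul])
  · exact mul_ne_one_of_disjoint_smul hUi.nonempty
      (FreeGroup.range_lift_le (Set.range_subset_iff.2 hΓ) ⟨_, rfl⟩) hagree
      (hUD _ (Finset.mem_union_left _ (Finset.mem_image_of_mem σ hw)) hσ) hw1

end
end
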